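/- A binomial B = x^u - x^v ∈ I_A is indispensable if and only if {x^u, x^v} is a 1-dimensional facet of the indispensable complex Δ_ind(A) and deg_A(B) is a minimal binomial A-degree. -/

import Mathlib

open MvPolynomial

noncomputable section

/-- The `A`-degree of a monomial exponent vector `u`. -/
def degA {m n : ℕ} (A : Fin m → Fin n → ℤ) (u : Fin m →₀ ℕ) : Fin n → ℤ :=
  ∑ i, (u i : ℤ) • A i

/-- The affine semigroup `ℕA` is pointed. -/
def IsPointed {m n : ℕ} (A : Fin m → Fin n → ℤ) : Prop :=
  ∀ u v : Fin m →₀ ℕ, degA A u + degA A v = 0 → degA A u = 0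

/-- The toric ideal `I_A`. -/
def toricIdeal (K : Type*) [Field K] {m n : ℕ} (A : Fin m → Fin n → ℤ) :
    Ideal (MvPolynomial (Fin m) K) :=
  Ideal.span {f | ∃ u v : Fin m →₀ ℕ, degA A u = degA A v ∧
    f = monomial u (1 : K) - monomial v 1}

/-- `b` belongs to the affine semigroup `ℕA`. -/
def inNA {m n : ℕ} (A : Fin m → Fin n → ℤ) (b : Fin n → ℤ) : Prop :=
  ∃ u : Fin m →₀ ℕ, degA A u = b

/-- `c` is strictly smaller than `b` in the natural partial order on `ℕA`. -/
def ltA {m n : ℕ} (A : Fin m → Fin n → ℤ) (c b : Fin n → ℤ) : Prop :=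
  (∃ e, inNA A e ∧ b = c + e) ∧ c ≠ b

/-- The ideal `I_{A,b}` generated by binomials of `A`-degree strictly less than `b`. -/
def subIdeal (K : Type*) [Field K] {m n : ℕ} (A : Fin m → Fin n → ℤ) (b : Fin n → ℤ) :
    Ideal (MvPolynomial (Fin m) K) :=
  Ideal.span {f | ∃ u v : Fin m →₀ ℕ, degA A u = degA A v ∧ ltA A (degA A u) b ∧
    f = monomial u (1 : K) - monomial v 1}

/-- The graph `G(b)` on the fiber `deg_A^{-1}(b)`. -/
def fiberGraph (K : Type*) [Field K] {m n : ℕ} (A : Fin m → Fin n → ℤ) (b : Fin n → ℤ) :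
    SimpleGraph {u : Fin m →₀ ℕ // degA A u = b} where
  Adj x y := x ≠ y ∧ monomial x.1 (1 : K) - monomial y.1 1 ∈ subIdeal K A b
  symm := by
    constructor
    rintro x y ⟨hne, hmem⟩
    exact ⟨hne.symm, by simpa [neg_sub] using neg_mem hmem⟩
  loopless := ⟨fun x h => h.1 rfl⟩

/-- A set of binomials of `I_A`. -/
def IsBinomialSet (K : Type*) [Field K] {m n : ℕ} (A : Fin m → Fin n → ℤ)
    (S : Set (MvPolynomial (Fin m) K)) : Prop :=
  ∀ f ∈ S, ∃ u v : Fin m →₀ ℕ, degA A u = degA A v ∧ f = monomial u (1 : K) - monomial v 1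

/-- A minimal system of binomial generators of `I_A`. -/
def IsMinimalGenSet (K : Type*) [Field K] {m n : ℕ} (A : Fin m → Fin n → ℤ)
    (S : Set (MvPolynomial (Fin m) K)) : Prop :=
  IsBinomialSet K A S ∧ Ideal.span S = toricIdeal K A ∧
    ∀ T : Set (MvPolynomial (Fin m) K), T ⊂ S → Ideal.span T ≠ toricIdeal K A

/-- `b` is a Betti `A`-degree. -/
def IsBettiDegree (K : Type*) [Field K] {m n : ℕ} (A : Fin m → Fin n → ℤ)
    (b : Fin n → ℤ) : Prop :=
  ∃ S, IsMinimalGenSet K A S ∧ ∃ u v : Fin m →₀ ℕ, degA A u = b ∧ degA A v = b ∧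
    monomial u (1 : K) - monomial v 1 ∈ S

/-- `b` is the `A`-degree of a nonzero binomial of `I_A`. -/
def IsBinomialDegree {m n : ℕ} (A : Fin m → Fin n → ℤ) (b : Fin n → ℤ) : Prop :=
  ∃ u v : Fin m →₀ ℕ, u ≠ v ∧ degA A u = b ∧ degA A v = b

/-- `b` is a minimal binomial `A`-degree. -/
def IsMinimalBinomialDegree {m n : ℕ} (A : Fin m → Fin n → ℤ) (b : Fin n → ℤ) : Prop :=
  IsBinomialDegree A b ∧ ∀ c, IsBinomialDegree A c → ¬ ltA A c b

/-- An indispensable binomial of `I_A`: it belongs, up to sign, to every binomial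
generating set of `I_A`. -/
def IsIndispensableBinomial (K : Type*) [Field K] {m n : ℕ} (A : Fin m → Fin n → ℤ)
    (f : MvPolynomial (Fin m) K) : Prop :=
  f ∈ toricIdeal K A ∧
    ∀ S, IsBinomialSet K A S → Ideal.span S = toricIdeal K A → f ∈ S ∨ -f ∈ S

/-- The number of minimal systems of binomial generators of `I_A`, where the
sign of a binomial does not count (a system is recorded as the set of its
sign-pairs `{f, -f}`). -/
def nuIA (K : Type*) [Field K] {m n : ℕ} (A : Fin m → Fin n → ℤ) : ℕ :=
  Set.ncard {U : Set (Set (MvPolynomial (Fin m) K)) |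
    ∃ S, IsMinimalGenSet K A S ∧ U = (fun f => ({f, -f} : Set (MvPolynomial (Fin m) K))) '' S}

/-- The number of elements of `A`-degree `b` in the generating set `S`. -/
def betti0 (K : Type*) [Field K] {m n : ℕ} (A : Fin m → Fin n → ℤ)
    (S : Set (MvPolynomial (Fin m) K)) (b : Fin n → ℤ) : ℕ :=
  Set.ncard {f ∈ S | ∃ u v : Fin m →₀ ℕ, degA A u = b ∧ degA A v = b ∧
    f = monomial u (1 : K) - monomial v 1}

/-- The set of exponents of monomials of the monomial ideal `M_A`. -/
def MAset {m n : ℕ} (A : Fin m → Fin n → ℤ) : Set (Fin m →₀ ℕ) :=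
  {u | ∃ v : Fin m →₀ ℕ, v ≠ u ∧ degA A v = degA A u}

/-- The minimal monomial generating set `T_A` of `M_A` (monomials of `M_A`
minimal under divisibility). -/
def TA {m n : ℕ} (A : Fin m → Fin n → ℤ) : Set (Fin m →₀ ℕ) :=
  {u ∈ MAset A | ∀ w ∈ MAset A, (∀ i, w i ≤ u i) → w = u}

/-
The span of a set of binomials `x^p - x^q` contains `x^u - x^v` exactly when `u` and `v` are
related by the additive congruence generated by the pairs `(p, q)`: one direction builds the
binomial from a chain of moves, the other maps to the monoid algebra of the quotient monoid.
So `x^u - x^v` is indispensable iff `u` and `v` are not connected by moves coming from the other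
binomials of `I_A`. A third monomial `t` of the same degree gives `u ~ t ~ v`, and a common
factor `w` gives `u - w ~ v - w`; conversely, if `u, v` are the only monomials of their degree
and `u ⊓ v = 0`, no move can change a monomial dividing `x^u`. These two conditions say exactly
that `u, v` are the only elements of `T_A` of their degree and that this degree is minimal.
-/

namespace MvPolynomial

variable {σ K : Type*} [CommRing K]

def binomialSpan (r : (σ →₀ ℕ) → (σ →₀ ℕ) → Prop) : Ideal (MvPolynomial σ K) :=
  Ideal.span {f | ∃ p q, r p q ∧ f = monomial p 1 - monomial q 1}

def _root_.Ideal.monomialAddCon (I : Ideal (MvPolynomial σ K)) : AddCon (σ →₀ ℕ) where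
  r a b := monomial a 1 - monomial b 1 ∈ I
  iseqv :=
    { refl a := by simp
      symm h := by simpa using neg_mem h
      trans h h' := by simpa using add_mem h h' }
  add' {a b c d} h h' := by
    have : monomial (a + c) (1 : K) - monomial (b + d) 1 =
        monomial c 1 * (monomial a 1 - monomial b 1) +
          monomial b 1 * (monomial c 1 - monomial d 1) := by
      simp only [mul_sub, monomial_mul, mul_one, add_comm c]; ring
    rw [this]
    exact add_mem (I.mul_mem_left _ h) (I.mul_mem_left _ h')

theorem monomial_sub_monomial_mem_binomialSpan_iff [Nontrivial K]
    {r : (σ →₀ ℕ) → (σ →₀ ℕ) → Prop} {a b : σ →₀ ℕ} :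
    monomial a (1 : K) - monomial b 1 ∈ binomialSpan r ↔ addConGen r a b := by
  constructor
  · intro h
    let φ := AddMonoidAlgebra.mapDomainRingHom K (addConGen r).mk'
    have hφ (p : σ →₀ ℕ) :
        φ (monomial p 1) = AddMonoidAlgebra.single (p : (addConGen r).Quotient) 1 :=
      AddMonoidAlgebra.mapDomain_single
    have hker : (binomialSpan r : Ideal (MvPolynomial σ K)) ≤ RingHom.ker φ := by
      refine Ideal.span_le.mpr ?_
      rintro _ ⟨p, q, hpq, rfl⟩
      rw [SetLike.mem_coe, RingHom.mem_ker, map_sub, hφ, hφ, sub_eq_zero,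
        (AddCon.eq _).mpr (AddConGen.Rel.of _ _ hpq)]
    have := hker h
    rw [RingHom.mem_ker, map_sub, hφ, hφ, sub_eq_zero] at this
    exact (AddCon.eq _).mp ((AddMonoidAlgebra.single_left_inj one_ne_zero).mp this)
  · intro h
    refine (AddCon.addConGen_le (c := Ideal.monomialAddCon (binomialSpan r))).mpr ?_ h
    exact fun p q hpq => Ideal.subset_span ⟨p, q, hpq, rfl⟩

/-- Only the unordered pair is determined: in characteristic `2`, `x^u - x^v = x^v - x^u`. -/
theorem sym2_eq_of_monomial_sub_monomial_eq [Nontrivial K] {u v p q : σ →₀ ℕ} (huv : u ≠ v)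
    (h : monomial u (1 : K) - monomial v 1 = monomial p 1 - monomial q 1) :
    s(u, v) = s(p, q) := by
  classical
  have hcoeff (w : σ →₀ ℕ) (hp : p ≠ w) (hq : q ≠ w) :
      coeff w (monomial u (1 : K) - monomial v 1) = 0 := by
    simp [h, coeff_monomial, hp, hq]
  have hu : p = u ∨ q = u := by
    by_contra! H
    simpa [coeff_monomial, huv.symm] using hcoeff u H.1 H.2
  have hv : p = v ∨ q = v := by
    by_contra! H
    simpa [coeff_monomial, huv] using hcoeff v H.1 H.2
  rcases hu with rfl | rfl <;> rcases hv with rfl | rfl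
  all_goals first | exact absurd rfl huv | simp [Sym2.eq_swap]

end MvPolynomial

section

variable {m n : ℕ}

/-- `x^p - x^q` is a binomial of `I_A` other than `±(x^u - x^v)`. -/
def OtherMove (A : Fin m → Fin n → ℤ) (u v p q : Fin m →₀ ℕ) : Prop :=
  degA A p = degA A q ∧ s(p, q) ≠ s(u, v)

variable {A : Fin m → Fin n → ℤ}

theorem degA_add (u v : Fin m →₀ ℕ) : degA A (u + v) = degA A u + degA A v := by
  simp [degA, add_smul, Finset.sum_add_distrib]

theorem degA_zero : degA A 0 = 0 := by
  simp [degA]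

theorem degA_tsub_add {u w : Fin m →₀ ℕ} (h : w ≤ u) : degA A (u - w) + degA A w = degA A u := by
  rw [← degA_add, tsub_add_cancel_of_le h]

theorem mem_TA_iff_minimal {u : Fin m →₀ ℕ} : u ∈ TA A ↔ Minimal (· ∈ MAset A) u := by
  simp only [TA, minimal_iff, Set.mem_ofPred_eq, ← Finsupp.le_def, eq_comm (a := u)]

theorem exists_mem_TA_le {t : Fin m →₀ ℕ} (ht : t ∈ MAset A) : ∃ w ∈ TA A, w ≤ t := by
  obtain ⟨w, hwt, hw⟩ := exists_minimal_le_of_wellFoundedLT _ t ht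
  exact ⟨w, mem_TA_iff_minimal.mpr hw, hwt⟩

theorem eq_zero_of_mem_TA {s u : Fin m →₀ ℕ} (hs : s ≠ 0) (hs0 : degA A s = 0) (hu : u ∈ TA A) :
    u = 0 :=
  (mem_TA_iff_minimal.mp hu).eq_of_ge ⟨s, hs, hs0.trans degA_zero.symm⟩ zero_le

theorem isBinomialDegree_of_mem_MAset {w : Fin m →₀ ℕ} (hw : w ∈ MAset A) :
    IsBinomialDegree A (degA A w) :=
  let ⟨t, htw, ht⟩ := hw; ⟨t, w, htw, ht, rfl⟩

theorem IsMinimalBinomialDegree.eq_of_eq_add {b c : Fin n → ℤ}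
    (hb : IsMinimalBinomialDegree A b) (hc : IsBinomialDegree A c) {w : Fin m →₀ ℕ}
    (h : b = c + degA A w) : c = b := by
  by_contra hne
  exact hb.2 c hc ⟨⟨_, ⟨w, rfl⟩, h⟩, hne⟩

theorem isIndispensableBinomial_iff_notMem_binomialSpan {K : Type*} [Field K]
    {u v : Fin m →₀ ℕ} (huv : u ≠ v) (hdeg : degA A u = degA A v) :
    IsIndispensableBinomial K A (monomial u (1 : K) - monomial v 1) ↔
      monomial u (1 : K) - monomial v 1 ∉ binomialSpan (OtherMove A u v) := by
  have hmem : monomial u (1 : K) - monomial v 1 ∈ toricIdeal K A :=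
    Ideal.subset_span ⟨u, v, hdeg, rfl⟩
  constructor
  · rintro ⟨-, hind⟩ hspan
    let S : Set (MvPolynomial (Fin m) K) :=
      {f | ∃ p q, OtherMove A u v p q ∧ f = monomial p 1 - monomial q 1}
    have hS : IsBinomialSet K A S := fun f ⟨p, q, hpq, hf⟩ => ⟨p, q, hpq.1, hf⟩
    have hSspan : Ideal.span S = toricIdeal K A := by
      refine le_antisymm (Ideal.span_mono fun f ⟨p, q, hpq, hf⟩ => ⟨p, q, hpq.1, hf⟩)
        (Ideal.span_le.mpr ?_)
      rintro _ ⟨p, q, hpq, rfl⟩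
      by_cases h : s(p, q) = s(u, v)
      · rcases Sym2.eq_iff.mp h with ⟨rfl, rfl⟩ | ⟨rfl, rfl⟩
        · exact hspan
        · exact neg_sub (monomial q (1 : K)) (monomial p 1) ▸ neg_mem hspan
      · exact Ideal.subset_span ⟨p, q, ⟨hpq, h⟩, rfl⟩
    rcases hind S hS hSspan with ⟨p, q, hpq, hf⟩ | ⟨p, q, hpq, hf⟩
    · exact hpq.2 (sym2_eq_of_monomial_sub_monomial_eq huv hf).symm
    · rw [neg_sub] at hf
      exact hpq.2 ((sym2_eq_of_monomial_sub_monomial_eq huv.symm hf).symm.trans Sym2.eq_swap)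
  · intro hnot
    refine ⟨hmem, fun S hS hSspan => ?_⟩
    by_contra! hnS
    refine hnot (Ideal.span_le.mpr (fun f hf => ?_) (hSspan ▸ hmem))
    obtain ⟨p, q, hpq, rfl⟩ := hS f hf
    refine Ideal.subset_span ⟨p, q, ⟨hpq, fun h => ?_⟩, rfl⟩
    rcases Sym2.eq_iff.mp h with ⟨rfl, rfl⟩ | ⟨rfl, rfl⟩
    · exact hnS.1 hf
    · exact hnS.2 (by simpa using hf)

theorem OtherMove.symm {u v p q : Fin m →₀ ℕ} (h : OtherMove A u v p q) : OtherMove A u v q p :=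
  ⟨h.1.symm, Sym2.eq_swap.trans_ne h.2⟩

theorem eq_of_addConGen_otherMove {u v : Fin m →₀ ℕ}
    (hfib : ∀ t, degA A t = degA A u → t = u ∨ t = v) (hinf : u ⊓ v = 0) {a b : Fin m →₀ ℕ}
    (h : addConGen (OtherMove A u v) a b) : a ≤ u ∨ b ≤ u → a = b := by
  have hmove {p q : Fin m →₀ ℕ} (hpq : OtherMove A u v p q) (hp : p ≤ u) : p = q := by
    have hdeg : degA A (q + (u - p)) = degA A u := by
      rw [degA_add, ← hpq.1, add_comm, degA_tsub_add hp]
    rcases hfib _ hdeg with h | h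
    · exact (add_right_cancel (h.trans (add_tsub_cancel_of_le hp).symm)).symm
    · have hup : u - p = 0 := nonpos_iff_eq_zero.mp (hinf ▸ le_inf tsub_le_self (h ▸ le_add_self))
      obtain rfl : p = u := le_antisymm hp (tsub_eq_zero_iff_le.mp hup)
      rw [hup, add_zero] at h
      exact absurd (h ▸ rfl) hpq.2
  induction h with
  | of p q hpq => rintro (hp | hq); exacts [hmove hpq hp, (hmove hpq.symm hq).symm]
  | refl => exact fun _ => rfl
  | symm _ ih => exact fun h => (ih h.symm).symm
  | trans _ _ ih₁ ih₂ =>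
    rintro (ha | hc)
    · obtain rfl := ih₁ (.inl ha); exact ih₂ (.inl ha)
    · obtain rfl := ih₂ (.inr hc); exact ih₁ (.inr hc)
  | add _ _ ih₁ ih₂ =>
    rintro (h | h)
    · rw [ih₁ (.inl (le_self_add.trans h)), ih₂ (.inl (le_add_self.trans h))]
    · rw [ih₁ (.inr (le_self_add.trans h)), ih₂ (.inr (le_add_self.trans h))]

theorem not_addConGen_otherMove_iff {u v : Fin m →₀ ℕ} (huv : u ≠ v)
    (hdeg : degA A u = degA A v) :
    ¬ addConGen (OtherMove A u v) u v ↔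
      (∀ t, degA A t = degA A u → t = u ∨ t = v) ∧ u ⊓ v = 0 := by
  refine ⟨fun hnot => ⟨fun t ht => ?_, ?_⟩,
    fun ⟨hfib, hinf⟩ h => huv (eq_of_addConGen_otherMove hfib hinf h (.inl le_rfl))⟩
  · by_contra! htuv
    refine hnot (AddConGen.Rel.trans (.of u t ⟨ht.symm, ?_⟩) (.of t v ⟨ht.trans hdeg, ?_⟩))
    · exact fun h => htuv.2 (Sym2.congr_right.mp h)
    · exact fun h => htuv.1 (Sym2.congr_left.mp h)
  · by_contra hw
    set w := u ⊓ v
    have hwu : w ≤ u := inf_le_left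
    have hwv : w ≤ v := inf_le_right
    have hmove : OtherMove A u v (u - w) (v - w) := by
      refine ⟨add_right_cancel ((degA_tsub_add hwu).trans (hdeg.trans (degA_tsub_add hwv).symm)),
        fun h => ?_⟩
      rcases Sym2.eq_iff.mp h with ⟨hu, -⟩ | ⟨hu, hv⟩
      · exact hw (add_eq_left.mp (hu ▸ tsub_add_cancel_of_le hwu))
      · exact huv (le_antisymm (hv ▸ tsub_le_self) (hu ▸ tsub_le_self))
    have := AddConGen.Rel.add (AddConGen.Rel.refl w) (AddConGen.Rel.of _ _ hmove)
    rw [add_tsub_cancel_of_le hwu, add_tsub_cancel_of_le hwv] at this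
    exact hnot this

theorem mem_TA_of_fiber_eq_pair {u v : Fin m →₀ ℕ} (huv : u ≠ v) (hdeg : degA A u = degA A v)
    (hfib : ∀ t, degA A t = degA A u → t = u ∨ t = v) (hinf : u ⊓ v = 0) : u ∈ TA A := by
  refine mem_TA_iff_minimal.mpr ⟨⟨v, huv.symm, hdeg.symm⟩, fun w ⟨t, htw, ht⟩ hwu => ?_⟩
  have hdeg' : degA A (t + (u - w)) = degA A u := by
    rw [degA_add, ht, add_comm, degA_tsub_add hwu]
  rcases hfib _ hdeg' with h | h
  · exact absurd (add_right_cancel (h.trans (add_tsub_cancel_of_le hwu).symm)) htw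
  · have huw : u - w = 0 := nonpos_iff_eq_zero.mp (hinf ▸ le_inf tsub_le_self (h ▸ le_add_self))
    exact tsub_eq_zero_iff_le.mp huw

theorem isMinimalBinomialDegree_of_fiber_eq_pair {u v : Fin m →₀ ℕ} (huv : u ≠ v)
    (hdeg : degA A u = degA A v) (hfib : ∀ t, degA A t = degA A u → t = u ∨ t = v)
    (hinf : u ⊓ v = 0) : IsMinimalBinomialDegree A (degA A u) := by
  refine ⟨⟨u, v, huv, rfl, hdeg.symm⟩, ?_⟩
  rintro _ ⟨p, q, hpq, rfl, hq⟩ ⟨⟨_, ⟨w, rfl⟩, hu⟩, hne⟩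
  have hpw := hfib (p + w) (by rw [degA_add, hu])
  have hqw := hfib (q + w) (by rw [degA_add, hq, hu])
  have hw : w ≤ u ⊓ v := by
    rcases hpw with h | h <;> rcases hqw with h' | h'
    all_goals first
      | exact absurd (add_right_cancel (h.trans h'.symm)) hpq
      | exact le_inf (h ▸ le_add_self) (h' ▸ le_add_self)
      | exact le_inf (h' ▸ le_add_self) (h ▸ le_add_self)
  rw [hinf, nonpos_iff_eq_zero] at hw
  subst hw
  exact hne (by rw [hu, degA_zero, add_zero])

theorem fiber_eq_pair_and_inf_eq_zero_of_TA {u v : Fin m →₀ ℕ} (huv : u ≠ v)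
    (hdeg : degA A u = degA A v)
    (hTA : {w ∈ TA A | degA A w = degA A u} = {u, v})
    (hmin : IsMinimalBinomialDegree A (degA A u)) :
    (∀ t, degA A t = degA A u → t = u ∨ t = v) ∧ u ⊓ v = 0 := by
  have hmem (w : Fin m →₀ ℕ) : w ∈ TA A ∧ degA A w = degA A u ↔ w = u ∨ w = v :=
    Set.ext_iff.mp hTA w
  have hzero (s : Fin m →₀ ℕ) (hs : degA A s = 0) : s = 0 := by
    by_contra h
    exact huv ((eq_zero_of_mem_TA h hs ((hmem u).mpr (.inl rfl)).1).trans
      (eq_zero_of_mem_TA h hs ((hmem v).mpr (.inr rfl)).1).symm)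
  refine ⟨fun t ht => ?_, ?_⟩
  · by_contra! htuv
    obtain ⟨w, hw, hwt⟩ := exists_mem_TA_le ⟨u, htuv.1.symm, ht.symm⟩
    have hsplit : degA A (t - w) + degA A w = degA A t := degA_tsub_add hwt
    have hwdeg : degA A w = degA A u := hmin.eq_of_eq_add (w := t - w)
      (isBinomialDegree_of_mem_MAset hw.1) (by rw [← ht, ← hsplit, add_comm])
    have hwt' : w ≠ t := by rcases (hmem w).mp ⟨hw, hwdeg⟩ with rfl | rfl <;> tauto
    rw [hwdeg, ht] at hsplit
    exact hwt' (le_antisymm hwt (tsub_eq_zero_iff_le.mp (hzero _ (add_eq_right.mp hsplit))))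
  · set w := u ⊓ v
    have hwu : w ≤ u := inf_le_left
    have hwv : w ≤ v := inf_le_right
    have hsplit : degA A (u - w) + degA A w = degA A u := degA_tsub_add hwu
    have hne : u - w ≠ v - w := fun h => huv <| by
      rw [← tsub_add_cancel_of_le hwu, h, tsub_add_cancel_of_le hwv]
    have hbin : IsBinomialDegree A (degA A (u - w)) :=
      ⟨u - w, v - w, hne, rfl, add_right_cancel (hsplit.trans (hdeg.trans (degA_tsub_add hwv).symm)).symm⟩
    rw [hmin.eq_of_eq_add hbin hsplit.symm] at hsplit
    exact hzero w (add_eq_left.mp hsplit)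

theorem fiber_eq_pair_and_inf_eq_zero_iff {u v : Fin m →₀ ℕ} (huv : u ≠ v)
    (hdeg : degA A u = degA A v) :
    ((∀ t, degA A t = degA A u → t = u ∨ t = v) ∧ u ⊓ v = 0) ↔
      {w ∈ TA A | degA A w = degA A u} = {u, v} ∧ IsMinimalBinomialDegree A (degA A u) := by
  refine ⟨fun ⟨hfib, hinf⟩ => ⟨Set.ext fun w => ⟨fun hw => hfib w hw.2, ?_⟩,
    isMinimalBinomialDegree_of_fiber_eq_pair huv hdeg hfib hinf⟩,
    fun ⟨hTA, hmin⟩ => fiber_eq_pair_and_inf_eq_zero_of_TA huv hdeg hTA hmin⟩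
  have hfib' (t) (ht : degA A t = degA A v) : t = v ∨ t = u := (hfib t (ht.trans hdeg.symm)).symm
  rintro (rfl | rfl)
  · exact ⟨mem_TA_of_fiber_eq_pair huv hdeg hfib hinf, rfl⟩
  · exact ⟨mem_TA_of_fiber_eq_pair huv.symm hdeg.symm hfib' (inf_comm u w ▸ hinf), hdeg.symm⟩

end

theorem statement17_general {K : Type*} [Field K] {m n : ℕ} (A : Fin m → Fin n → ℤ)
    (u v : Fin m →₀ ℕ) (hne : u ≠ v) (hdeg : degA A u = degA A v) :
    IsIndispensableBinomial K A (monomial u (1 : K) - monomial v 1) ↔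
      ({w ∈ TA A | degA A w = degA A u} = {u, v} ∧
        IsMinimalBinomialDegree A (degA A u)) := by
  rw [isIndispensableBinomial_iff_notMem_binomialSpan hne hdeg,
    monomial_sub_monomial_mem_binomialSpan_iff, not_addConGen_otherMove_iff hne hdeg,
    fiber_eq_pair_and_inf_eq_zero_iff hne hdeg]

/-- A binomial `x^u - x^v ∈ I_A` is indispensable if and only if `{x^u, x^v}` is
a 1-dimensional facet of the indispensable complex (i.e. `u, v` are the only
elements of `T_A` of their `A`-degree) and its `A`-degree is a minimal binomial
`A`-degree. -/
theorem statement17 {K : Type*} [Field K] {m n : ℕ} (A : Fin m → Fin n → ℤ)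
    (hA : IsPointed A) (u v : Fin m →₀ ℕ) (hne : u ≠ v) (hdeg : degA A u = degA A v) :
    IsIndispensableBinomial K A (monomial u (1 : K) - monomial v 1) ↔
      ({w ∈ TA A | degA A w = degA A u} = {u, v} ∧
        IsMinimalBinomialDegree A (degA A u)) :=
  statement17_general A u v hne hdeg
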